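/- Let Section and Data be types, let states be functions Section → Data, let ι be a finite index type, and let π : ι → (Section → Data) → Prop be obligations such that each π i reads only a set D i ⊆ Section (π i S ↔ π i S' whenever S and S' agree on D i). Let m be a mutation that touches only M ⊆ Section (m S s = S s for all s ∉ M), and let S be a state satisfying every obligation π i. Then the mutated state m S satisfies every obligation π i if and only if m S satisfies every obligation π i whose read-set meets the touched sections, i.e., every i with D i ∩ M ≠ ∅. -/
import Mathlib


/-- Soundness of incremental verification: if the pre-mutation state
satisfies every obligation, then the mutated state satisfies every
obligation iff it satisfies every at-risk obligation (those whose
read-set meets the touched sections). -/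
theorem incremental_soundness {Sec Data : Type*} {ι : Type*} [Fintype ι]
    (D : ι → Set Sec) (M : Set Sec)
    (π : ι → (Sec → Data) → Prop)
    (hD : ∀ i, ∀ S S' : Sec → Data, (∀ s ∈ D i, S s = S' s) → (π i S ↔ π i S'))
    (m : (Sec → Data) → (Sec → Data))
    (hM : ∀ (S : Sec → Data), ∀ s ∉ M, m S s = S s)
    (S : Sec → Data) (hS : ∀ i, π i S) :
    (∀ i, π i (m S)) ↔ (∀ i, D i ∩ M ≠ ∅ → π i (m S)) := by
  constructor
  · exact fun h i _ => h i
  · intro h i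
    by_cases hc : D i ∩ M ≠ ∅
    · exact h i hc
    · push_neg at hc
      have : ∀ s ∈ D i, m S s = S s := by
        intro s hs
        apply hM
        intro hsM
        exact Set.eq_empty_iff_forall_notMem.mp hc s ⟨hs, hsM⟩
      exact (hD i (m S) S this).mpr (hS i)
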